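/- (Theorem 4) Let ρ be a fully separable density matrix on ℂ^{d₁} ⊗ ⋯ ⊗ ℂ^{d_n}, i.e. a finite convex combination of pure states of the form |ψ₁⟩⟨ψ₁| ⊗ ⋯ ⊗ |ψ_n⟩⟨ψ_n|. Then for every nonempty proper subset A ⊂ {1,…,n}, the A-matricization of the full correlation tensor T_{i₁⋯i_n} = tr(ρ (λ^{(1)}_{i₁} ⊗ ⋯ ⊗ λ^{(n)}_{i_n})) satisfies ‖T_{\underline{A}}‖_tr ≤ Π_{j=1}^{n} √(2(d_j−1)/d_j). Consequently, any state violating this inequality for some matricization is not fully separable. -/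

import Mathlib

open Matrix BigOperators

noncomputable section

/-- The tensor (Kronecker) product of `n` local operators on
`ℂ^{d₁} ⊗ ⋯ ⊗ ℂ^{d_n}`, with the Hilbert space indexed by dependent functions. -/
def tensorOp {n : ℕ} {d : Fin n → ℕ}
    (A : ∀ j, Matrix (Fin (d j)) (Fin (d j)) ℂ) :
    Matrix (∀ j, Fin (d j)) (∀ j, Fin (d j)) ℂ :=
  fun r c => ∏ j, A j (r j) (c j)

/-- The `A`-matricization of an `n`-index tensor `v`: the real matrix whose row
index collects the indices in `A` and whose column index collects the remaining
indices. -/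
def matricize {n : ℕ} {m : Fin n → ℕ} (A : Finset (Fin n))
    (v : (∀ j, Fin (m j)) → ℝ) :
    Matrix ((j : {j // j ∈ A}) → Fin (m j.1)) ((j : {j // j ∉ A}) → Fin (m j.1)) ℝ :=
  fun r c => v fun j => if h : j ∈ A then r ⟨j, h⟩ else c ⟨j, h⟩

/-- The singular values of a real matrix `M`: the square roots of the
eigenvalues of `MᵀM = MᴴM`. -/
def singVals {I J : Type*} [Fintype I] [Fintype J] [DecidableEq J]
    (M : Matrix I J ℝ) : J → ℝ :=
  fun j => Real.sqrt ((Matrix.posSemidef_conjTranspose_mul_self M).1.eigenvalues j)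

/-- The trace norm: the sum of all singular values. -/
def traceNorm {I J : Type*} [Fintype I] [Fintype J] [DecidableEq J]
    (M : Matrix I J ℝ) : ℝ :=
  ∑ j, singVals M j

/-!
The correlation tensor of a product state `|ψ₁⟩⟨ψ₁| ⊗ ⋯ ⊗ |ψₙ⟩⟨ψₙ|` is the outer product of the
local Bloch vectors `t⁽ʲ⁾ᵢ = tr(|ψⱼ⟩⟨ψⱼ| λ⁽ʲ⁾ᵢ)`, so each of its matricizations is a rank-one
matrix `u vᵀ` with `‖u‖ ‖v‖ = ∏ⱼ ‖t⁽ʲ⁾‖`. For a separable state the matricization is therefore a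
convex combination of such rank-one matrices, and the trace norm of `∑ₖ uₖ vₖᵀ` is at most
`∑ₖ ‖uₖ‖ ‖vₖ‖`: pairing the matrix with its normalized left and right singular vectors writes the
trace norm as `∑ₖ ∑ᵢ ⟪fᵢ, uₖ⟫ ⟪eᵢ, vₖ⟫`, which Cauchy–Schwarz and Bessel bound by `‖uₖ‖ ‖vₖ‖`.
Finally, `1/√d` and the `λᵢ/√2` are orthonormal for the Hilbert–Schmidt inner product, so Bessel's
inequality for a pure state `ρ` (with `tr ρ = ‖ρ‖ = 1`) gives `1/d + ‖t‖²/2 ≤ 1`, i.e.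
`‖t‖ ≤ √(2(d - 1)/d)`.
-/

open scoped InnerProductSpace
open WithLp (toLp)

theorem Orthonormal.sqrt_sum_inner_sq_le {ι E : Type*} [Fintype ι] [NormedAddCommGroup E]
    [InnerProductSpace ℝ E] {f : ι → E} (hf : Orthonormal ℝ f) (x : E) :
    √(∑ i, ⟪f i, x⟫_ℝ ^ 2) ≤ ‖x‖ :=
  Real.sqrt_le_iff.mpr ⟨norm_nonneg x, by simpa using hf.sum_inner_products_le x⟩

theorem Orthonormal.sum_inner_mul_inner_le {ι E F : Type*} [Fintype ι]
    [NormedAddCommGroup E] [InnerProductSpace ℝ E] [NormedAddCommGroup F] [InnerProductSpace ℝ F]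
    {f : ι → E} {e : ι → F} (hf : Orthonormal ℝ f) (he : Orthonormal ℝ e) (u : E) (v : F) :
    ∑ i, ⟪f i, u⟫_ℝ * ⟪e i, v⟫_ℝ ≤ ‖u‖ * ‖v‖ :=
  (Real.sum_mul_le_sqrt_mul_sqrt _ _ _).trans <|
    mul_le_mul (hf.sqrt_sum_inner_sq_le u) (he.sqrt_sum_inner_sq_le v) (Real.sqrt_nonneg _)
      (norm_nonneg u)

namespace Matrix

theorem toEuclideanLin_vecMulVec {I J : Type*} [Fintype J] [DecidableEq J] (u : I → ℝ)
    (v : J → ℝ) (x : EuclideanSpace ℝ J) :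
    toEuclideanLin (vecMulVec u v) x = ⟪toLp 2 v, x⟫_ℝ • toLp 2 u := by
  ext i
  simp [toLpLin_apply, vecMulVec_mulVec, EuclideanSpace.inner_eq_star_dotProduct, dotProduct_comm]

variable {I J : Type*} [Fintype I] [Fintype J] [DecidableEq J]

abbrev rightSingularBasis (M : Matrix I J ℝ) : OrthonormalBasis J ℝ (EuclideanSpace ℝ J) :=
  (posSemidef_conjTranspose_mul_self M).1.eigenvectorBasis

theorem inner_toEuclideanLin_rightSingularBasis (M : Matrix I J ℝ) (j l : J) :
    ⟪toEuclideanLin M (rightSingularBasis M j), toEuclideanLin M (rightSingularBasis M l)⟫_ℝ =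
      if j = l then (posSemidef_conjTranspose_mul_self M).1.eigenvalues j else 0 := by
  classical
  set hH := (posSemidef_conjTranspose_mul_self M).1
  have heig : toEuclideanLin Mᴴ (toEuclideanLin M (rightSingularBasis M l)) =
      hH.eigenvalues l • rightSingularBasis M l := by
    ext i
    simp only [toLpLin_apply, mulVec_mulVec, PiLp.smul_apply]
    exact congrFun (hH.mulVec_eigenvectorBasis l) i
  rw [← LinearMap.adjoint_inner_right, ← toEuclideanLin_conjTranspose_eq_adjoint, heig,
    inner_smul_right, orthonormal_iff_ite.mp (rightSingularBasis M).orthonormal]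
  split_ifs with h <;> simp [h]

theorem singVals_eq_norm (M : Matrix I J ℝ) (j : J) :
    singVals M j = ‖toEuclideanLin M (rightSingularBasis M j)‖ := by
  have h := inner_toEuclideanLin_rightSingularBasis M j j
  rw [if_pos rfl, real_inner_self_eq_norm_sq] at h
  rw [singVals, ← h, Real.sqrt_sq (norm_nonneg _)]

theorem traceNorm_eq_sum_inner (M : Matrix I J ℝ) :
    ∃ (s : Finset J) (f : J → EuclideanSpace ℝ I), Orthonormal ℝ (fun j : s ↦ f j) ∧
      traceNorm M = ∑ j : s, ⟪f j, toEuclideanLin M (rightSingularBasis M j)⟫_ℝ := by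
  set g := fun j ↦ toEuclideanLin M (rightSingularBasis M j)
  refine ⟨({j | g j ≠ 0} : Finset J), fun j ↦ ‖g j‖⁻¹ • g j, ?_, ?_⟩
  · rw [orthonormal_iff_ite]
    rintro ⟨j, hj⟩ ⟨l, -⟩
    simp only [real_inner_smul_left, real_inner_smul_right, Subtype.mk.injEq]
    split_ifs with h
    · subst h
      have hj : ‖g j‖ ≠ 0 := norm_ne_zero_iff.mpr (Finset.mem_filter.mp hj).2
      rw [real_inner_self_eq_norm_sq]
      field_simp
    · simp [g, inner_toEuclideanLin_rightSingularBasis, h]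
  · rw [traceNorm, ← Finset.sum_filter_of_ne (p := fun j ↦ g j ≠ 0), ← Finset.sum_coe_sort]
    · refine Finset.sum_congr rfl fun j _ ↦ ?_
      rw [real_inner_smul_left, real_inner_self_eq_norm_sq, singVals_eq_norm, sq,
        inv_mul_cancel_left₀ (norm_ne_zero_iff.mpr (Finset.mem_filter.mp j.2).2)]
    · exact fun j _ hj ↦ by rwa [singVals_eq_norm, norm_ne_zero_iff] at hj

theorem traceNorm_sum_vecMulVec_le {K : Type*} [Fintype K] (u : K → I → ℝ) (v : K → J → ℝ) :
    traceNorm (∑ k, vecMulVec (u k) (v k)) ≤ ∑ k, ‖toLp 2 (u k)‖ * ‖toLp 2 (v k)‖ := by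
  set M := ∑ k, vecMulVec (u k) (v k)
  obtain ⟨s, f, hf, hM⟩ := traceNorm_eq_sum_inner M
  have he : Orthonormal ℝ fun j : s ↦ rightSingularBasis M j :=
    (rightSingularBasis M).orthonormal.comp _ Subtype.val_injective
  have hMx (x : EuclideanSpace ℝ J) :
      toEuclideanLin M x = ∑ k, ⟪toLp 2 (v k), x⟫_ℝ • toLp 2 (u k) := by
    simp [M, LinearMap.sum_apply, toEuclideanLin_vecMulVec]
  calc traceNorm M
      = ∑ k, ∑ j : s, ⟪f j, toLp 2 (u k)⟫_ℝ * ⟪rightSingularBasis M j, toLp 2 (v k)⟫_ℝ := by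
        rw [hM, Finset.sum_comm]
        simp only [hMx, inner_sum, real_inner_smul_right, real_inner_comm, mul_comm]
    _ ≤ ∑ k, ‖toLp 2 (u k)‖ * ‖toLp 2 (v k)‖ :=
        Finset.sum_le_sum fun k _ ↦ hf.sum_inner_mul_inner_le he _ _

theorem inner_toLp_vec {m n 𝕜 : Type*} [Fintype m] [Fintype n] [RCLike 𝕜] (X Y : Matrix m n 𝕜) :
    ⟪toLp 2 X.vec, toLp 2 Y.vec⟫_𝕜 = (Xᴴ * Y).trace := by
  rw [EuclideanSpace.inner_toLp_toLp, dotProduct_comm, star_vec_dotProduct_vec]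

theorem norm_toLp_vec_vecMulVec {m n 𝕜 : Type*} [Fintype m] [Fintype n] [RCLike 𝕜]
    (x : m → 𝕜) (y : n → 𝕜) :
    ‖toLp 2 (vecMulVec x y).vec‖ = ‖toLp 2 x‖ * ‖toLp 2 y‖ := by
  refine (sq_eq_sq₀ (norm_nonneg _) (by positivity)).mp ?_
  simp only [EuclideanSpace.norm_sq_eq, mul_pow, vec, vecMulVec_apply, norm_mul,
    Fintype.sum_prod_type, Finset.sum_mul_sum]
  exact Finset.sum_comm

variable {n ι : Type*} [Fintype n] [DecidableEq n] [DecidableEq ι]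

def normalizedGenerators (lam : ι → Matrix n n ℂ) : Option ι → EuclideanSpace ℂ (n × n)
  | none => (((√(Fintype.card n))⁻¹ : ℝ) : ℂ) • toLp 2 (1 : Matrix n n ℂ).vec
  | some i => (((√2)⁻¹ : ℝ) : ℂ) • toLp 2 (lam i).vec

variable {lam : ι → Matrix n n ℂ}

theorem orthonormal_normalizedGenerators [Nonempty n] (hherm : ∀ i, (lam i).IsHermitian)
    (htr : ∀ i, (lam i).trace = 0)
    (horth : ∀ i k, (lam i * lam k).trace = if i = k then 2 else 0) :
    Orthonormal ℂ (normalizedGenerators lam) := by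
  have hscale {x : ℝ} (hx : 0 < x) :
      (((√x)⁻¹ : ℝ) : ℂ) * ((starRingEnd ℂ) ((√x)⁻¹ : ℝ) * x) = 1 := by
    rw [Complex.conj_ofReal, ← mul_assoc, ← Complex.ofReal_mul, ← mul_inv,
      Real.mul_self_sqrt hx.le, Complex.ofReal_inv, inv_mul_cancel₀ (by exact_mod_cast hx.ne')]
  rw [orthonormal_iff_ite]
  rintro (_ | i) (_ | k) <;>
    simp only [normalizedGenerators, inner_smul_left, inner_smul_right, inner_toLp_vec,
      conjTranspose_one, one_mul, mul_one, trace_one, (hherm _).eq, htr, horth, reduceCtorEq,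
      Option.some.injEq, if_true, if_false, mul_zero]
  · exact_mod_cast hscale (x := Fintype.card n) (by positivity)
  · split_ifs
    · exact_mod_cast hscale (x := 2) two_pos
    · rw [mul_zero, mul_zero]

theorem sq_norm_trace_div_card_add_sum_le [Fintype ι] [Nonempty n]
    (hherm : ∀ i, (lam i).IsHermitian) (htr : ∀ i, (lam i).trace = 0)
    (horth : ∀ i k, (lam i * lam k).trace = if i = k then 2 else 0) (ρ : Matrix n n ℂ) :
    ‖ρ.trace‖ ^ 2 / Fintype.card n + ∑ i, ‖(ρ * lam i).trace‖ ^ 2 / 2 ≤ ‖toLp 2 ρ.vec‖ ^ 2 := by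
  have h := (orthonormal_normalizedGenerators hherm htr horth).sum_inner_products_le
    (s := Finset.univ) (toLp 2 ρ.vec)
  rw [Fintype.sum_option] at h
  convert h using 3 with i
  · simp [normalizedGenerators, inner_smul_left, inner_toLp_vec, mul_pow, div_eq_inv_mul]
  · rw [normalizedGenerators, inner_smul_left, inner_toLp_vec, (hherm i).eq, trace_mul_comm]
    simp [mul_pow, div_eq_inv_mul]

def blochVector (lam : ι → Matrix n n ℂ) (ψ : n → ℂ) : EuclideanSpace ℝ ι :=
  toLp 2 fun i ↦ ((vecMulVec ψ (star ψ) * lam i).trace).re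

theorem norm_blochVector_le [Fintype ι] (hherm : ∀ i, (lam i).IsHermitian)
    (htr : ∀ i, (lam i).trace = 0)
    (horth : ∀ i k, (lam i * lam k).trace = if i = k then 2 else 0)
    {ψ : n → ℂ} (hψ : ‖toLp 2 ψ‖ = 1) :
    ‖blochVector lam ψ‖ ≤ √(2 * ((Fintype.card n : ℝ) - 1) / Fintype.card n) := by
  have : Nonempty n := by
    by_contra h
    rw [not_nonempty_iff] at h
    simp [EuclideanSpace.norm_eq] at hψ
  have htrace : (vecMulVec ψ (star ψ)).trace = 1 := by
    rw [trace_vecMulVec, ← EuclideanSpace.inner_toLp_toLp, inner_self_eq_norm_sq_to_K, hψ]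
    simp
  have hvec : ‖toLp 2 (vecMulVec ψ (star ψ)).vec‖ = 1 := by
    have : ‖toLp 2 (star ψ)‖ = ‖toLp 2 ψ‖ := by simp [EuclideanSpace.norm_eq]
    rw [norm_toLp_vec_vecMulVec, this, hψ, one_mul]
  have hbessel := sq_norm_trace_div_card_add_sum_le hherm htr horth (vecMulVec ψ (star ψ))
  rw [htrace, hvec, ← Finset.sum_div] at hbessel
  have hre : ∑ i, ‖((vecMulVec ψ (star ψ) * lam i).trace).re‖ ^ 2 ≤
      ∑ i, ‖(vecMulVec ψ (star ψ) * lam i).trace‖ ^ 2 :=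
    Finset.sum_le_sum fun i _ ↦ pow_le_pow_left₀ (norm_nonneg _) (Complex.abs_re_le_norm _) 2
  rw [blochVector, EuclideanSpace.norm_eq]
  refine Real.sqrt_le_sqrt (hre.trans ?_)
  simp only [norm_one, one_pow] at hbessel
  calc _ ≤ 2 * (1 - 1 / (Fintype.card n : ℝ)) := by linarith
    _ = 2 * ((Fintype.card n : ℝ) - 1) / Fintype.card n := by field_simp

end Matrix

theorem EuclideanSpace.norm_toLp_prod {κ : Type*} [Fintype κ] [DecidableEq κ] {β : κ → Type*}
    [∀ k, Fintype (β k)] (g : ∀ k, β k → ℝ) :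
    ‖toLp 2 (fun r : ∀ k, β k ↦ ∏ k, g k (r k))‖ = ∏ k, ‖toLp 2 (g k)‖ := by
  refine (sq_eq_sq₀ (norm_nonneg _) (by positivity)).mp ?_
  simp only [EuclideanSpace.norm_sq_eq, norm_prod, ← Finset.prod_pow, Fintype.prod_sum]

theorem Finset.prod_subtype_mem_mul_prod_subtype_notMem {ι M : Type*} [Fintype ι] [DecidableEq ι]
    [CommMonoid M] (s : Finset ι) (f : ι → M) :
    (∏ i : {i // i ∈ s}, f i) * ∏ i : {i // i ∉ s}, f i = ∏ i, f i := by
  rw [Finset.prod_coe_sort, ← Finset.prod_subtype sᶜ (fun _ ↦ Finset.mem_compl),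
    Finset.prod_mul_prod_compl]

theorem matricize_prod {n : ℕ} {m : Fin n → ℕ} (A : Finset (Fin n)) (g : ∀ j, Fin (m j) → ℝ) :
    matricize A (fun f ↦ ∏ j, g j (f j)) =
      vecMulVec (fun r ↦ ∏ j : {j // j ∈ A}, g j (r j))
        (fun c ↦ ∏ j : {j // j ∉ A}, g j (c j)) := by
  ext r c
  rw [matricize, vecMulVec_apply, ← Finset.prod_subtype_mem_mul_prod_subtype_notMem A]
  congr 1 <;> refine Finset.prod_congr rfl fun j _ ↦ ?_ <;> simp [j.2]

theorem traceNorm_matricize_sum_prod_le {n : ℕ} {m : Fin n → ℕ} {K : Type*} [Fintype K]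
    (A : Finset (Fin n)) {p : K → ℝ} (hp : ∀ a, 0 ≤ p a) (g : K → ∀ j, Fin (m j) → ℝ) :
    traceNorm (matricize A fun f ↦ ∑ a, p a * ∏ j, g a j (f j)) ≤
      ∑ a, p a * ∏ j, ‖toLp 2 (g a j)‖ := by
  have hsplit : matricize A (fun f ↦ ∑ a, p a * ∏ j, g a j (f j)) =
      ∑ a, vecMulVec (p a • fun r ↦ ∏ j : {j // j ∈ A}, g a j (r j))
        (fun c ↦ ∏ j : {j // j ∉ A}, g a j (c j)) := by
    calc matricize A (fun f ↦ ∑ a, p a * ∏ j, g a j (f j))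
        = ∑ a, p a • matricize A (fun f ↦ ∏ j, g a j (f j)) := by
          ext r c
          simp [matricize, Matrix.sum_apply]
      _ = _ := by simp only [matricize_prod, smul_vecMulVec]
  rw [hsplit]
  refine (Matrix.traceNorm_sum_vecMulVec_le _ _).trans_eq (Finset.sum_congr rfl fun a _ ↦ ?_)
  rw [WithLp.toLp_smul, norm_smul, Real.norm_of_nonneg (hp a), mul_assoc,
    EuclideanSpace.norm_toLp_prod, EuclideanSpace.norm_toLp_prod]
  exact congrArg (p a * ·)
    (Finset.prod_subtype_mem_mul_prod_subtype_notMem A fun j ↦ ‖toLp 2 (g a j)‖)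

theorem Matrix.IsHermitian.ofReal_re_trace_vecMulVec_mul {n : Type*} [Fintype n]
    {L : Matrix n n ℂ} (hL : L.IsHermitian) (ψ : n → ℂ) :
    (((vecMulVec ψ (star ψ) * L).trace).re : ℂ) = (vecMulVec ψ (star ψ) * L).trace := by
  rw [vecMulVec_mul, trace_vecMulVec, dotProduct_comm, ← dotProduct_mulVec]
  exact Complex.ext rfl (hL.im_star_dotProduct_mulVec_self ψ).symm

theorem trace_vecMulVec_prod_mul_tensorOp {n : ℕ} {d : Fin n → ℕ} (ψ : ∀ j, Fin (d j) → ℂ)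
    (L : ∀ j, Matrix (Fin (d j)) (Fin (d j)) ℂ) :
    (vecMulVec (fun r : ∀ j, Fin (d j) ↦ ∏ j, ψ j (r j))
        (star fun r : ∀ j, Fin (d j) ↦ ∏ j, ψ j (r j)) * tensorOp L).trace =
      ∏ j, (vecMulVec (ψ j) (star (ψ j)) * L j).trace := by
  simp only [trace, diag, mul_apply, vecMulVec_apply, tensorOp, Pi.star_apply, star_prod,
    ← Finset.prod_mul_distrib]
  rw [Fintype.prod_sum]
  simp_rw [Fintype.prod_sum]

theorem re_trace_separable_mul_tensorOp {n : ℕ} {d : Fin n → ℕ} {K : Type*} [Fintype K]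
    (p : K → ℝ) (ψ : K → ∀ j, Fin (d j) → ℂ) {L : ∀ j, Matrix (Fin (d j)) (Fin (d j)) ℂ}
    (hL : ∀ j, (L j).IsHermitian) :
    ((∑ a, (p a : ℂ) • vecMulVec (fun r : ∀ j, Fin (d j) ↦ ∏ j, ψ a j (r j))
        (star fun r : ∀ j, Fin (d j) ↦ ∏ j, ψ a j (r j))) * tensorOp L).trace.re =
      ∑ a, p a * ∏ j, ((vecMulVec (ψ a j) (star (ψ a j)) * L j).trace).re := by
  have hterm (a : K) : ((p a : ℂ) • vecMulVec (fun r : ∀ j, Fin (d j) ↦ ∏ j, ψ a j (r j))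
      (star fun r : ∀ j, Fin (d j) ↦ ∏ j, ψ a j (r j)) * tensorOp L).trace =
      ((p a * ∏ j, ((vecMulVec (ψ a j) (star (ψ a j)) * L j).trace).re : ℝ) : ℂ) := by
    rw [smul_mul_assoc, trace_smul, trace_vecMulVec_prod_mul_tensorOp, smul_eq_mul,
      Complex.ofReal_mul, Complex.ofReal_prod]
    congr 1
    exact Finset.prod_congr rfl fun j _ ↦ ((hL j).ofReal_re_trace_vecMulVec_mul (ψ a j)).symm
  rw [Finset.sum_mul, trace_sum, Finset.sum_congr rfl fun a _ ↦ hterm a, ← Complex.ofReal_sum,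
    Complex.ofReal_re]

theorem fully_separable_matricization_trace_norm_bound_general
    (n : ℕ) (d : Fin n → ℕ)
    (lam : ∀ j, Fin ((d j) ^ 2 - 1) → Matrix (Fin (d j)) (Fin (d j)) ℂ)
    (hherm : ∀ j i, (lam j i).IsHermitian)
    (htraceless : ∀ j i, (lam j i).trace = 0)
    (horth : ∀ j m k, (lam j m * lam j k).trace = if m = k then 2 else 0)
    (N : ℕ) (p : Fin N → ℝ) (hp : ∀ a, 0 ≤ p a) (hpsum : ∑ a, p a = 1)
    (ψ : Fin N → ∀ j, Fin (d j) → ℂ)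
    (hψunit : ∀ a j, ∑ x, Complex.normSq (ψ a j x) = 1)
    (ρ : Matrix (∀ j, Fin (d j)) (∀ j, Fin (d j)) ℂ)
    (hρ : ρ = ∑ a, (p a : ℂ) •
        Matrix.vecMulVec (fun r => ∏ j, ψ a j (r j)) (star fun r => ∏ j, ψ a j (r j)))
    (A : Finset (Fin n)) :
    traceNorm (matricize A
        (fun f => ((ρ * tensorOp fun j => lam j (f j)).trace).re)) ≤
      ∏ j, Real.sqrt (2 * ((d j : ℝ) - 1) / (d j)) := by
  have hcorr : (fun f : ∀ j, Fin (d j ^ 2 - 1) ↦ ((ρ * tensorOp fun j ↦ lam j (f j)).trace).re) =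
      fun f ↦ ∑ a, p a * ∏ j, blochVector (lam j) (ψ a j) (f j) := by
    funext f
    rw [hρ]
    exact re_trace_separable_mul_tensorOp p ψ fun j ↦ hherm j (f j)
  have hbloch (a j) : ‖blochVector (lam j) (ψ a j)‖ ≤ √(2 * ((d j : ℝ) - 1) / d j) := by
    have hψ : ‖toLp 2 (ψ a j)‖ = 1 := by
      simp [EuclideanSpace.norm_eq, ← Complex.normSq_eq_norm_sq, hψunit]
    simpa only [Fintype.card_fin] using norm_blochVector_le (hherm j) (htraceless j) (horth j) hψ
  rw [hcorr]
  calc _ ≤ ∑ a, p a * ∏ j, ‖blochVector (lam j) (ψ a j)‖ := traceNorm_matricize_sum_prod_le A hp _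
    _ ≤ ∑ a, p a * ∏ j, √(2 * ((d j : ℝ) - 1) / d j) :=
      Finset.sum_le_sum fun a _ ↦ mul_le_mul_of_nonneg_left
        (Finset.prod_le_prod (fun j _ ↦ norm_nonneg _) fun j _ ↦ hbloch a j) (hp a)
    _ = ∏ j, √(2 * ((d j : ℝ) - 1) / d j) := by rw [← Finset.sum_mul, hpsum, one_mul]

/-- Theorem 4: If `ρ` is a fully separable density matrix on
`ℂ^{d₁} ⊗ ⋯ ⊗ ℂ^{d_n}` (a finite convex combination of fully product pure
states), then for every nonempty proper subset `A` of the subsystems, the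
`A`-matricization of the full correlation tensor
`T_{i₁⋯i_n} = tr(ρ (λ^{(1)}_{i₁} ⊗ ⋯ ⊗ λ^{(n)}_{i_n}))` satisfies
`‖T_{A̲}‖_tr ≤ Π_j √(2(d_j − 1)/d_j)`.  Consequently, any state violating this
inequality for some matricization is not fully separable. -/
theorem fully_separable_matricization_trace_norm_bound
    (n : ℕ) (d : Fin n → ℕ) (hd : ∀ j, 2 ≤ d j)
    (lam : ∀ j, Fin ((d j) ^ 2 - 1) → Matrix (Fin (d j)) (Fin (d j)) ℂ)
    (hherm : ∀ j i, (lam j i).IsHermitian)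
    (htraceless : ∀ j i, (lam j i).trace = 0)
    (horth : ∀ j m k, (lam j m * lam j k).trace = if m = k then 2 else 0)
    (N : ℕ) (p : Fin N → ℝ) (hp : ∀ a, 0 ≤ p a) (hpsum : ∑ a, p a = 1)
    (ψ : Fin N → ∀ j, Fin (d j) → ℂ)
    (hψunit : ∀ a j, ∑ x, Complex.normSq (ψ a j x) = 1)
    (ρ : Matrix (∀ j, Fin (d j)) (∀ j, Fin (d j)) ℂ)
    (hρ : ρ = ∑ a, (p a : ℂ) •
        Matrix.vecMulVec (fun r => ∏ j, ψ a j (r j)) (star fun r => ∏ j, ψ a j (r j)))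
    (A : Finset (Fin n)) (hA : A.Nonempty) (hA' : A ≠ Finset.univ) :
    traceNorm (matricize A
        (fun f => ((ρ * tensorOp fun j => lam j (f j)).trace).re)) ≤
      ∏ j, Real.sqrt (2 * ((d j : ℝ) - 1) / (d j)) :=
  fully_separable_matricization_trace_norm_bound_general n d lam hherm htraceless horth N p hp hpsum
    ψ hψunit ρ hρ A
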